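/- arXiv:2101.01446 — 2 statements merged into one kernel-verified Lean document; each statement's English description precedes it below -/
import Mathlib

section
/- Let G be a finite group acting on a commutative ring A, and let q be a prime ideal of A^G. Then the set of prime ideals of A lying over q is a single orbit under the action of G on Spec(A); in particular it is finite. -/
/-- The subring `A^G` of `G`-invariant elements of `A`. -/
def fixedSubring (G A : Type*) [Group G] [CommRing A] [MulSemiringAction G A] : Subring A where
  carrier := {a | ∀ g : G, g • a = a}
  zero_mem' := by intro g; simp
  one_mem' := by intro g; simp
  add_mem' := by intro a b ha hb g; rw [smul_add, ha g, hb g]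
  mul_mem' := by intro a b ha hb g; rw [smul_mul', ha g, hb g]
  neg_mem' := by intro a ha g; rw [smul_neg, ha g]

/-!
`A` is integral over `A^G`, each `a` being a root of the invariant monic `∏ g, (X - g • a)`, so
primes lie over every prime of `A^G`. If `p₁, p₂` lie over `q` and `x ∈ p₁`, the norm
`∏ g, g • x` is invariant and lies in `p₁ ∩ A^G = p₂ ∩ A^G`, so some `g • x ∈ p₂`; by prime
avoidance `p₁ ⊆ g⁻¹ • p₂` for one `g`, and incomparability of integral extensions forces equality.
-/

section FixedSubring

variable (G A : Type*) [Group G] [CommRing A] [MulSemiringAction G A]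

instance fixedSubring.smulCommClass : SMulCommClass G (fixedSubring G A) A where
  smul_comm g r a := by
    change g • ((r : A) * a) = r * (g • a)
    rw [smul_mul', r.2 g]

instance fixedSubring.isInvariant : Algebra.IsInvariant (fixedSubring G A) A G where
  isInvariant a ha := ⟨⟨a, ha⟩, rfl⟩

end FixedSubring

open scoped Pointwise

/-- Let a finite group `G` act on a commutative ring `A` and let `q` be a prime
ideal of `A^G`.  Then there is a prime of `A` lying over `q`, any two primes of `A` lying over
`q` are in the same orbit of the action of `G` on `Spec A`, and the set of primes of `A` lying
over `q` is finite. -/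
theorem primes_over_fixed_prime_orbit (G A : Type*) [Group G] [Finite G] [CommRing A]
    [MulSemiringAction G A] (q : Ideal (fixedSubring G A)) (hq : q.IsPrime) :
    (∃ p : Ideal A, p.IsPrime ∧ p.comap (fixedSubring G A).subtype = q) ∧
      (∀ p₁ p₂ : Ideal A, p₁.IsPrime → p₂.IsPrime →
        p₁.comap (fixedSubring G A).subtype = q → p₂.comap (fixedSubring G A).subtype = q →
        ∃ g : G, p₁.map (MulSemiringAction.toRingHom G A g) = p₂) ∧
      {p : Ideal A | p.IsPrime ∧ p.comap (fixedSubring G A).subtype = q}.Finite := by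
  have := Algebra.IsInvariant.isIntegral (fixedSubring G A) A G
  obtain ⟨⟨p₀, hp₀, hp₀q⟩⟩ := Ideal.nonempty_primesOver (S := A) q
  have exists_smul_eq : ∀ p₁ p₂ : Ideal A, p₁.IsPrime → p₂.IsPrime →
      p₁.comap (fixedSubring G A).subtype = q → p₂.comap (fixedSubring G A).subtype = q →
      ∃ g : G, g • p₁ = p₂ := by
    intro p₁ p₂ hp₁ hp₂ hq₁ hq₂
    obtain ⟨g, hg⟩ :=
      Algebra.IsInvariant.exists_smul_of_under_eq _ A G p₁ p₂ (hq₁.trans hq₂.symm)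
    exact ⟨g, hg.symm⟩
  refine ⟨⟨p₀, hp₀, hp₀q.over.symm⟩, exists_smul_eq, ?_⟩
  refine (Set.finite_range fun g : G ↦ g • p₀).subset ?_
  rintro p ⟨hp, hpq⟩
  exact exists_smul_eq p₀ p hp₀ hp hp₀q.over.symm hpq
end

section
/- For a finite group G acting on a commutative ring A and s an element of A that becomes invertible in a G-equivariant localisation, the element ∏_{g∈G} g(s) lies in A^G and is a product of s with other elements of A; consequently any G-equivariant localisation of A is a localisation at a multiplicative subset of A^G. -/
theorem IsLocalization.of_forall_dvd_mem {R S : Type*} [CommSemiring R] [CommSemiring S]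
    [Algebra R S] (M N : Submonoid R) [IsLocalization M S]
    (hN : ∀ n ∈ N, IsUnit (algebraMap R S n)) (hMN : ∀ m ∈ M, ∃ n ∈ N, m ∣ n) :
    IsLocalization N S := by
  let U := (IsUnit.submonoid S).comap (algebraMap R S)
  have : IsLocalization U S :=
    of_le M U (fun m hm => map_units S (⟨m, hm⟩ : M)) fun _ hu => hu
  refine (iff_of_le_of_exists_dvd N U hN fun u hu => ?_).mpr this
  obtain ⟨m, hm, hum⟩ := (algebraMap_isUnit_iff M).mp hu
  obtain ⟨n, hn, hmn⟩ := hMN m hm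
  exact ⟨n, hn, hum.trans hmn⟩

theorem dvd_prod_smul {G A : Type*} [Monoid G] [Fintype G] [CommMonoid A] [MulAction G A]
    (s : A) : s ∣ ∏ g : G, g • s := by
  simpa only [one_smul] using Finset.dvd_prod_of_mem (fun g : G => g • s) (Finset.mem_univ 1)

theorem prod_smul_mem_fixedSubring {G A : Type*} [Group G] [Fintype G] [CommRing A]
    [MulSemiringAction G A] (s : A) : ∏ g : G, g • s ∈ fixedSubring G A := fun h => by
  calc h • ∏ g : G, g • s = ∏ g : G, (h * g) • s := by
        simp only [Finset.smul_prod', smul_smul]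
    _ = ∏ g : G, g • s := Fintype.prod_equiv (Equiv.mulLeft h) _ _ fun _ => rfl

theorem isUnit_map_prod_smul {G A B F : Type*} [Monoid G] [Fintype G] [CommMonoid A]
    [CommMonoid B] [MulAction G A] [MulDistribMulAction G B] [FunLike F A B] [MonoidHomClass F A B]
    (f : F) (hf : ∀ (g : G) (a : A), f (g • a) = g • f a) {s : A} (hs : IsUnit (f s)) :
    IsUnit (f (∏ g : G, g • s)) := by
  rw [map_prod, IsUnit.prod_univ_iff]
  intro g
  rw [hf]
  exact hs.map (MulDistribMulAction.toMonoidHom B g)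

/-- For a finite group `G` acting on a commutative ring `A` and an element
`s ∈ A` that becomes invertible in a `G`-equivariant localisation `B` of `A`, the element
`∏_{g ∈ G} g(s)` lies in `A^G` and is a product of `s` with another element of `A`; consequently
the `G`-equivariant localisation `B` of `A` is a localisation at a multiplicative subset
of `A^G`. -/
theorem equivariant_localization_at_invariants (G A B : Type*) [Group G] [Fintype G]
    [CommRing A] [CommRing B] [MulSemiringAction G A] [MulSemiringAction G B]
    (f : A →+* B) (hf : ∀ (g : G) (a : A), f (g • a) = g • f a)
    (M : Submonoid A) (hloc : @IsLocalization A _ M B _ f.toAlgebra) :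
    (∀ s : A, IsUnit (f s) →
      (∏ g : G, g • s) ∈ fixedSubring G A ∧ ∃ t : A, (∏ g : G, g • s) = s * t) ∧
      ∃ N : Submonoid A, (N : Set A) ⊆ (fixedSubring G A : Set A) ∧
        @IsLocalization A _ N B _ f.toAlgebra := by
  let _ : Algebra A B := f.toAlgebra
  refine ⟨fun s _ => ⟨prod_smul_mem_fixedSubring s, dvd_prod_smul s⟩, ?_⟩
  let N := (IsUnit.submonoid B).comap f ⊓ (fixedSubring G A).toSubmonoid
  refine ⟨N, fun _ ha => ha.2, IsLocalization.of_forall_dvd_mem M N (fun _ hn => hn.1) ?_⟩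
  intro m hm
  have hunit : IsUnit (f m) := IsLocalization.map_units B (⟨m, hm⟩ : M)
  exact ⟨∏ g : G, g • m, ⟨isUnit_map_prod_smul f hf hunit, prod_smul_mem_fixedSubring m⟩,
    dvd_prod_smul m⟩
end
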